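/- arXiv:2508.08160 — 2 statements merged into one kernel-verified Lean document; each statement's English description precedes it below -/
import Mathlib

section
/- Under the subspace amplitude-amplification hypotheses, let P_{𝒮⊥} be the orthogonal projection of H_S onto the orthogonal complement of 𝒮, and define R_Ψ := (1_S ⊗ 2|0⟩⟨0| − 1) ∘ (1 − P_{𝒮⊥} ⊗ 2|0⟩⟨0|) on H_S ⊗ H_A. Then R_Ψ reflects along Ψψ on the span of {Ψψ, Ψψ⊥}: for every unit vector ψ ∈ 𝒮 one has R_Ψ Ψψ = Ψψ and R_Ψ Ψψ⊥ = −Ψψ⊥. -/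
open Matrix Kronecker

/-- Kronecker (tensor) product of vectors: `(x ⊗ y) (a, b) = x a * y b`. -/
noncomputable def vecTensor {n m : Type*} (x : EuclideanSpace ℂ n) (y : EuclideanSpace ℂ m) :
    EuclideanSpace ℂ (n × m) :=
  WithLp.toLp 2 (fun p : n × m => x p.1 * y p.2)

/-- The matrix of the orthogonal projection of `ℂ^n` onto the orthogonal complement of the
subspace `𝒮`. -/
noncomputable def projPerpMatrix {n : ℕ} (𝒮 : Submodule ℂ (EuclideanSpace ℂ (Fin n))) :
    Matrix (Fin n) (Fin n) ℂ :=
  Matrix.toEuclideanLin.symm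
    (𝒮ᗮ.subtype ∘ₗ (Submodule.orthogonalProjectionOnto 𝒮ᗮ :
      EuclideanSpace ℂ (Fin n) →L[ℂ] 𝒮ᗮ).toLinearMap)

/-! ### Auxiliary definitions and lemmas -/

/-- Partial inner product with `zero` in the second factor. -/
noncomputable def chiAux {n m : ℕ} (zero : EuclideanSpace ℂ (Fin m))
    (v : EuclideanSpace ℂ (Fin n × Fin m)) : EuclideanSpace ℂ (Fin n) :=
  WithLp.toLp 2 (fun j => ∑ b, (starRingEnd ℂ) (zero b) * v (j, b))

section Aux

variable {n m : ℕ} (zero : EuclideanSpace ℂ (Fin m))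

lemma chiAux_sub (a b : EuclideanSpace ℂ (Fin n × Fin m)) :
    chiAux zero (a - b) = chiAux zero a - chiAux zero b := by
  ext j
  simp [chiAux, Finset.sum_sub_distrib, mul_sub]

lemma chiAux_smul (c : ℂ) (a : EuclideanSpace ℂ (Fin n × Fin m)) :
    chiAux zero (c • a) = c • chiAux zero a := by
  ext j
  simp [chiAux, Finset.mul_sum]
  apply Finset.sum_congr rfl; intros; ring

lemma chiAux_zero_vec : chiAux zero (0 : EuclideanSpace ℂ (Fin n × Fin m)) = 0 := by
  ext j; simp [chiAux]

lemma toEL_one {ι : Type*} [Fintype ι] [DecidableEq ι] (x : EuclideanSpace ℂ ι) :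
    Matrix.toEuclideanLin (1 : Matrix ι ι ℂ) x = x := by
  show WithLp.toLp 2 ((1 : Matrix ι ι ℂ) *ᵥ x.ofLp) = x
  rw [Matrix.one_mulVec]

lemma toEL_mul {ι : Type*} [Fintype ι] [DecidableEq ι] (A B : Matrix ι ι ℂ)
    (x : EuclideanSpace ℂ ι) :
    Matrix.toEuclideanLin (A * B) x = Matrix.toEuclideanLin A (Matrix.toEuclideanLin B x) :=
  congrArg (WithLp.toLp 2) (Matrix.mulVec_mulVec _ _ _).symm

lemma kron_P0_mulVec (A : Matrix (Fin n) (Fin n) ℂ) (v : EuclideanSpace ℂ (Fin n × Fin m)) :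
    Matrix.toEuclideanLin (A ⊗ₖ (Matrix.of fun a b : Fin m => zero a * star (zero b))) v
      = vecTensor (Matrix.toEuclideanLin A (chiAux zero v)) zero := by
  ext p
  show ∑ q, _ = _
  rw [Fintype.sum_prod_type]
  show _ = (∑ j, A p.1 j * ∑ b, (starRingEnd ℂ) (zero b) * v (j, b)) * zero p.2
  simp only [Matrix.kroneckerMap_apply, Matrix.of_apply, Finset.mul_sum, Finset.sum_mul,
    starRingEnd_apply]
  apply Finset.sum_congr rfl; intros; apply Finset.sum_congr rfl; intros
  ring_nf; rfl

lemma chiAux_vecTensor (hzero : ‖zero‖ = 1) (x : EuclideanSpace ℂ (Fin n)) :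
    chiAux zero (vecTensor x zero) = x := by
  have h1 : (∑ b, (starRingEnd ℂ) (zero b) * zero b) = 1 := by
    have := @inner_self_eq_norm_sq_to_K ℂ _ _ _ _ zero
    rw [hzero, PiLp.inner_apply] at this
    simp only [RCLike.inner_apply] at this
    calc _ = ∑ b, zero b * (starRingEnd ℂ) (zero b) :=
          Finset.sum_congr rfl fun b _ => mul_comm _ _
      _ = 1 := by rw [this]; simp
  ext j
  calc chiAux zero (vecTensor x zero) j = x j * ∑ b, (starRingEnd ℂ) (zero b) * zero b := by
        simp only [chiAux, vecTensor, Finset.mul_sum]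
        apply Finset.sum_congr rfl; intros; ring
    _ = x j := by rw [h1, mul_one]

lemma inner_vecTensor_left (x : EuclideanSpace ℂ (Fin n)) (w : EuclideanSpace ℂ (Fin n × Fin m)) :
    (inner ℂ (vecTensor x zero) w : ℂ) = inner ℂ x (chiAux zero w) := by
  simp only [PiLp.inner_apply, RCLike.inner_apply, chiAux, vecTensor, Fintype.sum_prod_type,
    Finset.mul_sum, Finset.sum_mul, starRingEnd_apply, star_mul']
  apply Finset.sum_congr rfl; intros; apply Finset.sum_congr rfl; intros; ring

lemma inner_euclidean_mulVec_left {ι : Type*} [Fintype ι] [DecidableEq ι] (A : Matrix ι ι ℂ)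
    (x y : EuclideanSpace ℂ ι) :
    (inner ℂ (Matrix.toEuclideanLin A x) y : ℂ) = inner ℂ x (Matrix.toEuclideanLin Aᴴ y) := by
  simp only [PiLp.inner_apply, RCLike.inner_apply]
  show ∑ i, y i * (starRingEnd ℂ) (A.mulVec x i) = ∑ j, Aᴴ.mulVec y j * (starRingEnd ℂ) (x j)
  simp only [Matrix.mulVec, dotProduct, Matrix.conjTranspose_apply, map_sum,
    Finset.sum_mul, Finset.mul_sum, starRingEnd_apply, star_mul']
  rw [Finset.sum_comm]
  apply Finset.sum_congr rfl; intros; apply Finset.sum_congr rfl; intros; ring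

lemma inner_euclidean_mulVec_right {ι : Type*} [Fintype ι] [DecidableEq ι] (A : Matrix ι ι ℂ)
    (x y : EuclideanSpace ℂ ι) :
    (inner ℂ x (Matrix.toEuclideanLin A y) : ℂ) = inner ℂ (Matrix.toEuclideanLin Aᴴ x) y := by
  rw [inner_euclidean_mulVec_left, Matrix.conjTranspose_conjTranspose]

lemma real_smul_eq (r : ℝ) {ι : Type*} (x : EuclideanSpace ℂ ι) :
    r • x = (r : ℂ) • x := by
  ext i
  simp [PiLp.smul_apply, Complex.real_smul]

lemma vecTensor_smul_left (c : ℂ) (x : EuclideanSpace ℂ (Fin n)) :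
    vecTensor (c • x) zero = c • vecTensor x zero := by
  ext p
  simp only [vecTensor, PiLp.smul_apply, smul_eq_mul]
  ring

lemma projPerp_mulVec {𝒮 : Submodule ℂ (EuclideanSpace ℂ (Fin n))}
    (x : EuclideanSpace ℂ (Fin n)) :
    Matrix.toEuclideanLin (projPerpMatrix 𝒮) x
      = (Submodule.orthogonalProjectionOnto 𝒮ᗮ x : EuclideanSpace ℂ (Fin n)) := by
  have : Matrix.toEuclideanLin (projPerpMatrix 𝒮) x
      = (𝒮ᗮ.subtype ∘ₗ (Submodule.orthogonalProjectionOnto 𝒮ᗮ :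
        EuclideanSpace ℂ (Fin n) →L[ℂ] 𝒮ᗮ).toLinearMap) x := by
    rw [projPerpMatrix, Matrix.toEuclideanLin.apply_symm_apply]
  exact this

lemma projPerp_of_mem {𝒮 : Submodule ℂ (EuclideanSpace ℂ (Fin n))}
    (x : EuclideanSpace ℂ (Fin n)) (hx : x ∈ 𝒮) :
    Matrix.toEuclideanLin (projPerpMatrix 𝒮) x = 0 := by
  rw [projPerp_mulVec]
  rw [Submodule.orthogonalProjectionOnto_apply_of_mem_orthogonal
    (Submodule.le_orthogonal_orthogonal 𝒮 hx)]
  rfl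

lemma projPerp_of_memPerp {𝒮 : Submodule ℂ (EuclideanSpace ℂ (Fin n))}
    (x : EuclideanSpace ℂ (Fin n)) (hx : x ∈ 𝒮ᗮ) :
    Matrix.toEuclideanLin (projPerpMatrix 𝒮) x = x := by
  rw [projPerp_mulVec]
  have h : (↑(Submodule.orthogonalProjectionOnto 𝒮ᗮ x) : EuclideanSpace ℂ (Fin n)) = x :=
    Submodule.starProjection_eq_self_iff.mpr hx
  exact h

lemma vecTensor_zero_left (y : EuclideanSpace ℂ (Fin m)) :
    vecTensor (0 : EuclideanSpace ℂ (Fin n)) y = 0 := by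
  ext p; simp [vecTensor]

/-- The action of the reflection `R_Ψ` on an arbitrary vector. -/
lemma RPsi_apply (hzero : ‖zero‖ = 1) (𝒮 : Submodule ℂ (EuclideanSpace ℂ (Fin n)))
    (w : EuclideanSpace ℂ (Fin n × Fin m)) :
    Matrix.toEuclideanLin
        ((((1 : Matrix (Fin n) (Fin n) ℂ) ⊗ₖ
            ((2 : ℂ) • Matrix.of fun a b : Fin m => zero a * star (zero b)) - 1)) *
          (1 - projPerpMatrix 𝒮 ⊗ₖ
            ((2 : ℂ) • Matrix.of fun a b : Fin m => zero a * star (zero b))))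
        w
      = (2 : ℂ) • vecTensor (chiAux zero w) zero
        - (2 : ℂ) • vecTensor (Matrix.toEuclideanLin (projPerpMatrix 𝒮) (chiAux zero w)) zero
        - w := by
  set P0 : Matrix (Fin m) (Fin m) ℂ := Matrix.of fun a b : Fin m => zero a * star (zero b)
    with hP0
  set Q := projPerpMatrix 𝒮 with hQ
  set c := chiAux zero w with hc
  set q : EuclideanSpace ℂ (Fin n) := Matrix.toEuclideanLin Q c with hq
  have hBw : Matrix.toEuclideanLin (1 - Q ⊗ₖ ((2:ℂ) • P0)) w
      = w - (2:ℂ) • vecTensor q zero := by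
    rw [map_sub Matrix.toEuclideanLin, LinearMap.sub_apply, toEL_one, Matrix.kronecker_smul,
      map_smul Matrix.toEuclideanLin, LinearMap.smul_apply, kron_P0_mulVec]
  have key : Matrix.toEuclideanLin _ w
      = Matrix.toEuclideanLin ((1 : Matrix (Fin n) (Fin n) ℂ) ⊗ₖ ((2:ℂ) • P0) - 1)
        (Matrix.toEuclideanLin (1 - Q ⊗ₖ ((2:ℂ) • P0)) w) := toEL_mul _ _ w
  rw [key, hBw, map_sub Matrix.toEuclideanLin, LinearMap.sub_apply, toEL_one,
    Matrix.kronecker_smul, map_smul Matrix.toEuclideanLin, LinearMap.smul_apply,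
    kron_P0_mulVec, toEL_one]
  have hchi : chiAux zero (w - (2:ℂ) • vecTensor q zero) = c - (2:ℂ) • q := by
    rw [chiAux_sub, chiAux_smul, chiAux_vecTensor zero hzero, ← hc]
  rw [hchi]
  have hvt : vecTensor (c - (2:ℂ) • q) zero
      = vecTensor c zero - (2:ℂ) • vecTensor q zero := by
    ext p; simp [vecTensor]; ring
  rw [hvt]
  module

end Aux

/-- **Subspace amplitude amplification: the reflection `R_Ψ`** (Lemma 3(b), second part, of
the supplemental material): `R_Ψ := (1_S ⊗ 2|0⟩⟨0| − 1)(1 − P_{𝒮⊥} ⊗ 2|0⟩⟨0|)` fixes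
`Ψψ = ψ ⊗ |0⟩` and negates `Ψψ⊥ = U†(cos θ • Φψ − sin θ • Φψ⊥)`. -/
theorem subspace_amplitude_amplification_reflection_psi
    (n m : ℕ) (hn : 1 ≤ n) (hm : 1 ≤ m)
    (U : Matrix (Fin n × Fin m) (Fin n × Fin m) ℂ)
    (hU : U ∈ Matrix.unitaryGroup (Fin n × Fin m) ℂ)
    (M : Matrix (Fin n) (Fin n) ℂ)
    (𝒮 : Submodule ℂ (EuclideanSpace ℂ (Fin n)))
    (θ : ℝ) (hsin : Real.sin θ ≠ 0) (hcos : Real.cos θ ≠ 0)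
    (zero : EuclideanSpace ℂ (Fin m)) (hzero : ‖zero‖ = 1)
    (hM : ∀ ψ ∈ 𝒮, ∀ ψ' ∈ 𝒮,
      (inner ℂ ψ' (Matrix.toEuclideanLin (Mᴴ * M) ψ) : ℂ) = inner ℂ ψ' ψ)
    (Φperp : EuclideanSpace ℂ (Fin n) → EuclideanSpace ℂ (Fin n × Fin m))
    (hUact : ∀ ψ ∈ 𝒮, ‖ψ‖ = 1 →
      Matrix.toEuclideanLin U (vecTensor ψ zero) =
        Real.sin θ • vecTensor (Matrix.toEuclideanLin M ψ) zero + Real.cos θ • Φperp ψ)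
    (hperp : ∀ ψ ∈ 𝒮, ‖ψ‖ = 1 →
      (inner ℂ (Φperp ψ) (vecTensor (Matrix.toEuclideanLin M ψ) zero) : ℂ) = 0)
    (hanc : ∀ ψ ∈ 𝒮, ‖ψ‖ = 1 →
      Matrix.toEuclideanLin
        ((1 : Matrix (Fin n) (Fin n) ℂ) ⊗ₖ (Matrix.of fun a b : Fin m => zero a * star (zero b)))
        (Φperp ψ) = 0) :
    ∀ ψ ∈ 𝒮, ‖ψ‖ = 1 →
      Matrix.toEuclideanLin
          ((((1 : Matrix (Fin n) (Fin n) ℂ) ⊗ₖ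
              ((2 : ℂ) • Matrix.of fun a b : Fin m => zero a * star (zero b)) - 1)) *
            (1 - projPerpMatrix 𝒮 ⊗ₖ
              ((2 : ℂ) • Matrix.of fun a b : Fin m => zero a * star (zero b))))
          (vecTensor ψ zero)
        = vecTensor ψ zero ∧
      Matrix.toEuclideanLin
          ((((1 : Matrix (Fin n) (Fin n) ℂ) ⊗ₖ
              ((2 : ℂ) • Matrix.of fun a b : Fin m => zero a * star (zero b)) - 1)) *
            (1 - projPerpMatrix 𝒮 ⊗ₖ
              ((2 : ℂ) • Matrix.of fun a b : Fin m => zero a * star (zero b))))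
          (Matrix.toEuclideanLin Uᴴ
            (Real.cos θ • vecTensor (Matrix.toEuclideanLin M ψ) zero
              - Real.sin θ • Φperp ψ))
        = -(Matrix.toEuclideanLin Uᴴ
            (Real.cos θ • vecTensor (Matrix.toEuclideanLin M ψ) zero
              - Real.sin θ • Φperp ψ)) := by
  intro ψ hψS hψ1
  have hSC : ((Real.sin θ : ℂ)) ^ 2 + ((Real.cos θ : ℂ)) ^ 2 = 1 := by
    norm_cast; exact Real.sin_sq_add_cos_sq θ
  have hCne : ((Real.cos θ : ℂ)) ≠ 0 := Complex.ofReal_ne_zero.mpr hcos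
  -- chiAux of Φperp vanishes
  have hchiPerp : ∀ φ ∈ 𝒮, ‖φ‖ = 1 → chiAux zero (Φperp φ) = 0 := by
    intro φ hφ hφ1
    have h := hanc φ hφ hφ1
    have h2 : vecTensor (Matrix.toEuclideanLin (1 : Matrix (Fin n) (Fin n) ℂ)
        (chiAux zero (Φperp φ))) zero
        = 0 := by
      rw [← kron_P0_mulVec]; exact h
    rw [toEL_one] at h2
    have := congrArg (chiAux zero) h2
    rwa [chiAux_vecTensor zero hzero, chiAux_zero_vec] at this
  have hinnerPerp : ∀ φ ∈ 𝒮, ‖φ‖ = 1 → ∀ x : EuclideanSpace ℂ (Fin n),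
      (inner ℂ (vecTensor x zero) (Φperp φ) : ℂ) = 0 := by
    intro φ hφ hφ1 x
    rw [inner_vecTensor_left, hchiPerp φ hφ hφ1, inner_zero_right]
  have hinnerPerp' : ∀ φ ∈ 𝒮, ‖φ‖ = 1 → ∀ x : EuclideanSpace ℂ (Fin n),
      (inner ℂ (Φperp φ) (vecTensor x zero) : ℂ) = 0 := by
    intro φ hφ hφ1 x
    rw [← inner_conj_symm, hinnerPerp φ hφ hφ1 x, map_zero]
  have hMM : ∀ φ ∈ 𝒮, ∀ φ' ∈ 𝒮,
      (inner ℂ (vecTensor (Matrix.toEuclideanLin M φ) zero)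
        (vecTensor (Matrix.toEuclideanLin M φ') zero) : ℂ) = inner ℂ φ φ' := by
    intro φ hφ φ' hφ'
    rw [inner_vecTensor_left, chiAux_vecTensor zero hzero,
      inner_euclidean_mulVec_left]
    have : Matrix.toEuclideanLin Mᴴ (Matrix.toEuclideanLin M φ')
        = Matrix.toEuclideanLin (Mᴴ * M) φ' := (toEL_mul Mᴴ M φ').symm
    rw [this]
    exact hM φ' hφ' φ hφ
  have hUnit : ∀ x y : EuclideanSpace ℂ (Fin n × Fin m),
      (inner ℂ (Matrix.toEuclideanLin U x) (Matrix.toEuclideanLin U y) : ℂ) = inner ℂ x y := by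
    intro x y
    rw [inner_euclidean_mulVec_left]
    have h1 : Matrix.toEuclideanLin Uᴴ (Matrix.toEuclideanLin U y)
        = Matrix.toEuclideanLin (Uᴴ * U) y := (toEL_mul Uᴴ U y).symm
    have h2 : Uᴴ * U = 1 := by rw [← Matrix.star_eq_conjTranspose]; exact hU.1
    rw [h1, h2]
    congr 1
    exact toEL_one y
  have hTT : ∀ φ φ' : EuclideanSpace ℂ (Fin n),
      (inner ℂ (vecTensor φ zero) (vecTensor φ' zero) : ℂ) = inner ℂ φ φ' := by
    intro φ φ'
    rw [inner_vecTensor_left, chiAux_vecTensor zero hzero]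
  have hPP : ∀ φ ∈ 𝒮, ‖φ‖ = 1 → ∀ φ' ∈ 𝒮, ‖φ'‖ = 1 →
      (inner ℂ (Φperp φ) (Φperp φ') : ℂ) = inner ℂ φ φ' := by
    intro φ hφ hφ1 φ' hφ' hφ'1
    have hbase : (inner ℂ (Matrix.toEuclideanLin U (vecTensor φ zero))
        (Matrix.toEuclideanLin U (vecTensor φ' zero)) : ℂ) = inner ℂ φ φ' := by
      rw [hUnit, hTT]
    rw [hUact φ hφ hφ1, hUact φ' hφ' hφ'1] at hbase
    simp only [real_smul_eq, inner_add_left, inner_add_right, inner_smul_left,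
      inner_smul_right, Complex.conj_ofReal] at hbase
    rw [hMM φ hφ φ' hφ', hinnerPerp φ' hφ' hφ'1 _, hinnerPerp' φ hφ hφ1 _] at hbase
    have h2 : ((Real.cos θ : ℂ)) ^ 2 * (inner ℂ (Φperp φ) (Φperp φ') : ℂ)
        = ((Real.cos θ : ℂ)) ^ 2 * inner ℂ φ φ' := by
      linear_combination hbase - (inner ℂ φ φ' : ℂ) * hSC
    exact mul_left_cancel₀ (pow_ne_zero 2 hCne) h2
  -- the vector Ψψ⊥
  set v : EuclideanSpace ℂ (Fin n × Fin m) :=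
    Matrix.toEuclideanLin Uᴴ
      (Real.cos θ • vecTensor (Matrix.toEuclideanLin M ψ) zero - Real.sin θ • Φperp ψ)
    with hv
  have hv0 : ∀ φ ∈ 𝒮, ‖φ‖ = 1 → (inner ℂ (vecTensor φ zero) v : ℂ) = 0 := by
    intro φ hφ hφ1
    rw [hv, inner_euclidean_mulVec_right, Matrix.conjTranspose_conjTranspose,
      hUact φ hφ hφ1]
    simp only [real_smul_eq, inner_add_left, inner_sub_right, inner_smul_left,
      inner_smul_right, Complex.conj_ofReal]
    rw [hMM φ hφ ψ hψS, hinnerPerp ψ hψS hψ1 _, hinnerPerp' φ hφ hφ1 _,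
      hPP φ hφ hφ1 ψ hψS hψ1]
    ring
  have hmem : chiAux zero v ∈ 𝒮ᗮ := by
    rw [Submodule.mem_orthogonal]
    intro u hu
    rw [← inner_vecTensor_left]
    by_cases h : u = 0
    · subst h; rw [vecTensor_zero_left, inner_zero_left]
    · have hu' : (‖u‖⁻¹ : ℝ) • u ∈ 𝒮 := by
        rw [real_smul_eq]; exact 𝒮.smul_mem _ hu
      have h1 : ‖(‖u‖⁻¹ : ℝ) • u‖ = 1 := norm_smul_inv_norm h
      have h2 := hv0 _ hu' h1
      rw [real_smul_eq, vecTensor_smul_left, inner_smul_left, Complex.conj_ofReal] at h2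
      have h3 : ((‖u‖⁻¹ : ℝ) : ℂ) ≠ 0 :=
        Complex.ofReal_ne_zero.mpr (inv_ne_zero (norm_ne_zero_iff.mpr h))
      rcases mul_eq_zero.mp h2 with h4 | h4
      · exact absurd h4 h3
      · exact h4
  constructor
  · rw [RPsi_apply zero hzero 𝒮, chiAux_vecTensor zero hzero, projPerp_of_mem ψ hψS,
      vecTensor_zero_left, smul_zero]
    module
  · rw [RPsi_apply zero hzero 𝒮, projPerp_of_memPerp _ hmem]
    module
end

section
/- Suppose the uniform-bulk matrix-product operator U_N is unitary for every N ≥ 1. Let σ, τ ∈ Matrix (Fin d) (Fin d) ℂ be density matrices (positive semidefinite with trace 1). Define L², R² ∈ Matrix (Fin D) (Fin D) ℂ by (L²)_{a' a} := Σ_{i, j, j'} σ_{j j'} · conj((lᵀ * A^{i j'})_{a'}) · ((lᵀ * A^{i j})_a) and (R²)_{b b'} := Σ_{i, j, j'} τ_{j j'} · conj((A^{i j'} *ᵥ r)_{b'}) · ((A^{i j} *ᵥ r)_b). Then L² and R² are positive semidefinite, and, denoting by L and R their positive-semidefinite square roots, for every n ≥ 1 the linear map V_n : ℂ^{(Fin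 n → Fin d)} → ℂ^{Fin D × (Fin n → Fin d) × Fin D} with matrix entries (V_n)_{(a, i⃗, b), j⃗} := Σ_{a', b'} L_{a a'} · (T^{i⃗, j⃗})_{a' b'} · R_{b' b} is an isometry: V_nᴴ * V_n = 1. Moreover the boundary variants with the vector l in place of L, (V_n^{[l,R]})_{(i⃗, b), j⃗} := Σ_{b'} (lᵀ * T^{i⃗, j⃗})_{b'} · R_{b' b}, and with the vector r in place of R, (V_n^{[L,r]})_{(a, i⃗), j⃗} := Σ_{a'} L_{a a'} · (T^{i⃗, j⃗} *ᵥ r)_{a'}, are also isometries. -/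
open Matrix
open scoped ComplexOrder

/-- Ordered product of the bulk tensors of a uniform matrix-product operator along the
physical multi-indices `i, j`. -/
noncomputable def uniformT {d D : ℕ} (A : Fin d → Fin d → Matrix (Fin D) (Fin D) ℂ)
    {n : ℕ} (i j : Fin n → Fin d) : Matrix (Fin D) (Fin D) ℂ :=
  (List.ofFn fun k => A (i k) (j k)).prod

/-- The positive semidefinite square root of a positive semidefinite matrix (as defined in the
older Mathlib, where `Matrix.PosSemidef.sqrt` existed). -/
noncomputable def Matrix.PosSemidef.sqrt {n : Type*} [Fintype n] [DecidableEq n] {𝕜 : Type*}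
    [RCLike 𝕜] {A : Matrix n n 𝕜} (hA : A.PosSemidef) : Matrix n n 𝕜 :=
  hA.1.eigenvectorUnitary.1 * diagonal ((↑) ∘ Real.sqrt ∘ hA.1.eigenvalues) *
    (star hA.1.eigenvectorUnitary : Matrix n n 𝕜)

namespace MPUAux

lemma sqrt_isHermitian {n : Type*} [Fintype n] [DecidableEq n]
    {M : Matrix n n ℂ} (hM : M.PosSemidef) : hM.sqrt.IsHermitian := by
  unfold Matrix.PosSemidef.sqrt
  rw [IsHermitian, conjTranspose_mul, conjTranspose_mul, diagonal_conjTranspose, mul_assoc]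
  congr 2
  · ext i; simp
  · simp [Matrix.star_eq_conjTranspose]

lemma sqrt_mul_self' {n : Type*} [Fintype n] [DecidableEq n]
    {M : Matrix n n ℂ} (hM : M.PosSemidef) : hM.sqrt * hM.sqrt = M := by
  unfold Matrix.PosSemidef.sqrt
  have hU : (star hM.1.eigenvectorUnitary : Matrix n n ℂ) * hM.1.eigenvectorUnitary.1 = 1 :=
    Unitary.coe_star_mul_self _
  conv_rhs => rw [hM.1.spectral_theorem, Unitary.conjStarAlgAut_apply]
  have hD : diagonal (((↑) : ℝ → ℂ) ∘ Real.sqrt ∘ hM.1.eigenvalues) *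
      diagonal ((↑) ∘ Real.sqrt ∘ hM.1.eigenvalues) = diagonal (RCLike.ofReal ∘ hM.1.eigenvalues) := by
    rw [diagonal_mul_diagonal]
    congr 1; ext i
    simp only [Function.comp_apply, ← Complex.ofReal_mul, Real.mul_self_sqrt (hM.eigenvalues_nonneg i)]
    rfl
  calc _ = (hM.1.eigenvectorUnitary.1 * diagonal ((↑) ∘ Real.sqrt ∘ hM.1.eigenvalues)) *
      ((star hM.1.eigenvectorUnitary : Matrix n n ℂ) * hM.1.eigenvectorUnitary.1) *
      (diagonal ((↑) ∘ Real.sqrt ∘ hM.1.eigenvalues) * (star hM.1.eigenvectorUnitary : Matrix n n ℂ)) := by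
        simp only [mul_assoc]; rfl
    _ = _ := by rw [hU, mul_one, mul_assoc, ← mul_assoc (diagonal _), hD]; simp [mul_assoc]


lemma sum_cyc3 {α β γ : Type*} [Fintype α] [Fintype β] [Fintype γ]
    (F : α → β → γ → ℂ) :
    ∑ a, ∑ b, ∑ c, F a b c = ∑ b, ∑ c, ∑ a, F a b c := by
  simp only [← Fintype.sum_prod_type']
  exact Fintype.sum_equiv ⟨fun p => (p.2.1, p.2.2, p.1), fun p => (p.2.2, p.1, p.2.1),
    fun _ => rfl, fun _ => rfl⟩ _ _ fun _ => rfl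

lemma sum_reorder4 {α β γ δ : Type*} [Fintype α] [Fintype β] [Fintype γ] [Fintype δ]
    (F : α → β → γ → δ → ℂ) :
    ∑ a, ∑ b, ∑ c, ∑ e, F a b c e = ∑ c, ∑ e, ∑ a, ∑ b, F a b c e := by
  simp only [← Fintype.sum_prod_type']
  exact Fintype.sum_equiv ⟨fun p => (p.2.2.1, p.2.2.2, p.1, p.2.1),
    fun p => (p.2.2.1, p.2.2.2, p.1, p.2.1), fun _ => rfl, fun _ => rfl⟩ _ _ fun _ => rfl

lemma sum_reorder7 {α₁ α₂ α₃ α₄ α₅ α₆ α₇ : Type*}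
    [Fintype α₁] [Fintype α₂] [Fintype α₃] [Fintype α₄] [Fintype α₅] [Fintype α₆] [Fintype α₇]
    (F : α₁ → α₂ → α₃ → α₄ → α₅ → α₆ → α₇ → ℂ) :
    ∑ a₁, ∑ a₂, ∑ a₃, ∑ a₄, ∑ a₅, ∑ a₆, ∑ a₇, F a₁ a₂ a₃ a₄ a₅ a₆ a₇
      = ∑ a₃, ∑ a₄, ∑ a₆, ∑ a₇, ∑ a₁, ∑ a₂, ∑ a₅, F a₁ a₂ a₃ a₄ a₅ a₆ a₇ := by
  simp only [← Fintype.sum_prod_type']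
  exact Fintype.sum_equiv
    ⟨fun p => (p.2.2.1, p.2.2.2.1, p.2.2.2.2.2.1, p.2.2.2.2.2.2, p.1, p.2.1, p.2.2.2.2.1),
     fun p => (p.2.2.2.2.1, p.2.2.2.2.2.1, p.1, p.2.1, p.2.2.2.2.2.2, p.2.2.1, p.2.2.2.1),
     fun _ => rfl, fun _ => rfl⟩ _ _ fun _ => rfl


lemma sqrt_contract_r {D : ℕ} {M : Matrix (Fin D) (Fin D) ℂ} (hM : M.PosSemidef)
    (v w : Fin D → ℂ) :
    ∑ b : Fin D, star (∑ b'' : Fin D, w b'' * hM.sqrt b'' b) *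
        (∑ b' : Fin D, v b' * hM.sqrt b' b)
      = ∑ b' : Fin D, ∑ b'' : Fin D, star (w b'') * v b' * M b' b'' := by
  have hHerm := MPUAux.sqrt_isHermitian hM
  have hsq : ∀ b' b'' : Fin D, M b' b'' = ∑ b, hM.sqrt b' b * hM.sqrt b b'' := by
    intro b' b''; rw [← Matrix.mul_apply, MPUAux.sqrt_mul_self' hM]
  simp only [hsq, star_sum, star_mul', hHerm.apply, Finset.sum_mul, Finset.mul_sum]
  simp only [← Fintype.sum_prod_type']
  exact Fintype.sum_equiv ⟨fun p => (p.2.1, p.2.2, p.1), fun p => (p.2.2, p.1, p.2.1),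
    fun _ => rfl, fun _ => rfl⟩ _ _ fun _ => by simp only [Equiv.coe_fn_mk]; ring

lemma sqrt_contract_l {D : ℕ} {M : Matrix (Fin D) (Fin D) ℂ} (hM : M.PosSemidef)
    (v w : Fin D → ℂ) :
    ∑ a : Fin D, star (∑ a'' : Fin D, hM.sqrt a a'' * w a'') *
        (∑ a' : Fin D, hM.sqrt a a' * v a')
      = ∑ a' : Fin D, ∑ a'' : Fin D, M a'' a' * star (w a'') * v a' := by
  have hHerm := MPUAux.sqrt_isHermitian hM
  have hsq : ∀ a'' a' : Fin D, M a'' a' = ∑ a, hM.sqrt a'' a * hM.sqrt a a' := by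
    intro a'' a'; rw [← Matrix.mul_apply, MPUAux.sqrt_mul_self' hM]
  simp only [hsq, star_sum, star_mul', hHerm.apply, Finset.sum_mul, Finset.mul_sum]
  simp only [← Fintype.sum_prod_type']
  exact Fintype.sum_equiv ⟨fun p => (p.2.1, p.2.2, p.1), fun p => (p.2.2, p.1, p.2.1),
    fun _ => rfl, fun _ => rfl⟩ _ _ fun _ => by simp only [Equiv.coe_fn_mk]; ring


lemma aux_expand {β γ₁ γ₂ γ₃ : Type*} [Fintype β] [Fintype γ₁] [Fintype γ₂] [Fintype γ₃]
    (v w : β → ℂ) (c : γ₂ → γ₃ → ℂ) (p : γ₁ → γ₃ → β → ℂ) (q : γ₁ → γ₂ → β → ℂ) :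
    (∑ b' : β, ∑ b'' : β, star (w b'') * v b' *
        (∑ x : γ₁, ∑ y : γ₂, ∑ y' : γ₃, c y y' * star (p x y' b'') * q x y b'))
      = ∑ x : γ₁, ∑ y : γ₂, ∑ y' : γ₃,
          c y y' * star (∑ b'' : β, w b'' * p x y' b'') * (∑ b' : β, v b' * q x y b') := by
  simp only [star_sum, star_mul', Finset.sum_mul, Finset.mul_sum]
  simp only [← Fintype.sum_prod_type']
  exact Fintype.sum_equiv ⟨fun a => (a.2.2.1, a.2.2.2.1, a.2.2.2.2, a.1, a.2.1),
    fun a => (a.2.2.2.1, a.2.2.2.2, a.1, a.2.1, a.2.2.1),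
    fun _ => rfl, fun _ => rfl⟩ _ _ fun _ => by simp only [Equiv.coe_fn_mk]; ring


lemma aux_expandL {β γ₁ γ₂ γ₃ : Type*} [Fintype β] [Fintype γ₁] [Fintype γ₂] [Fintype γ₃]
    (v w : β → ℂ) (c : γ₂ → γ₃ → ℂ) (p : γ₁ → γ₃ → β → ℂ) (q : γ₁ → γ₂ → β → ℂ) :
    (∑ a' : β, ∑ a'' : β,
        (∑ x : γ₁, ∑ y : γ₂, ∑ y' : γ₃, c y y' * star (p x y' a'') * q x y a') *
          star (w a'') * v a')
      = ∑ x : γ₁, ∑ y : γ₂, ∑ y' : γ₃,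
          c y y' * star (∑ a'' : β, p x y' a'' * w a'') * (∑ a' : β, q x y a' * v a') := by
  simp only [star_sum, star_mul', Finset.sum_mul, Finset.mul_sum]
  simp only [← Fintype.sum_prod_type']
  exact Fintype.sum_equiv ⟨fun a => (a.2.2.1, a.2.2.2.1, a.2.2.2.2, a.1, a.2.1),
    fun a => (a.2.2.2.1, a.2.2.2.2, a.1, a.2.1, a.2.2.1),
    fun _ => rfl, fun _ => rfl⟩ _ _ fun _ => by simp only [Equiv.coe_fn_mk]; ring

lemma aux_expandLL {β γ₁ γ₂ γ₃ δ₁ δ₂ δ₃ : Type*} [Fintype β] [Fintype γ₁] [Fintype γ₂]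
    [Fintype γ₃] [Fintype δ₁] [Fintype δ₂] [Fintype δ₃]
    (c : γ₂ → γ₃ → ℂ) (p : γ₁ → γ₃ → β → ℂ) (q : γ₁ → γ₂ → β → ℂ)
    (e : δ₂ → δ₃ → ℂ) (f : δ₁ → δ₃ → β → ℂ) (g : δ₁ → δ₂ → β → ℂ) :
    (∑ a' : β, ∑ a'' : β,
        (∑ xL : γ₁, ∑ yL : γ₂, ∑ yL' : γ₃, c yL yL' * star (p xL yL' a'') * q xL yL a') *
          (∑ x : δ₁, ∑ y : δ₂, ∑ y' : δ₃, e y y' * star (f x y' a'') * g x y a'))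
      = ∑ xL : γ₁, ∑ yL : γ₂, ∑ yL' : γ₃, ∑ x : δ₁, ∑ y : δ₂, ∑ y' : δ₃,
          c yL yL' * e y y' * star (∑ a'' : β, p xL yL' a'' * f x y' a'') *
            (∑ a' : β, q xL yL a' * g x y a') := by
  simp only [star_sum, star_mul', Finset.sum_mul, Finset.mul_sum]
  simp only [← Fintype.sum_prod_type']
  exact Fintype.sum_equiv ⟨fun a => (a.2.2.2.2.2.1, a.2.2.2.2.2.2.1, a.2.2.2.2.2.2.2, a.2.2.1, a.2.2.2.1, a.2.2.2.2.1, a.1, a.2.1),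
    fun a => (a.2.2.2.2.2.2.1, a.2.2.2.2.2.2.2, a.2.2.2.1, a.2.2.2.2.1, a.2.2.2.2.2.1, a.1, a.2.1, a.2.2.1),
    fun _ => rfl, fun _ => rfl⟩ _ _ fun _ => by simp only [Equiv.coe_fn_mk]; ring


lemma uniformT_cons {d D n : ℕ} (A : Fin d → Fin d → Matrix (Fin D) (Fin D) ℂ)
    (x y : Fin d) (i j : Fin n → Fin d) :
    uniformT A (Fin.cons x i) (Fin.cons y j) = A x y * uniformT A i j := by
  simp [uniformT, List.ofFn_succ]

lemma uniformT_snoc {d D n : ℕ} (A : Fin d → Fin d → Matrix (Fin D) (Fin D) ℂ)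
    (i j : Fin n → Fin d) (x y : Fin d) :
    uniformT A (Fin.snoc i x) (Fin.snoc j y) = uniformT A i j * A x y := by
  unfold uniformT
  rw [List.ofFn_succ']
  simp [Fin.snoc_castSucc, Fin.snoc_last]

lemma dot2 {D : ℕ} (l r : Fin D → ℂ) (B C : Matrix (Fin D) (Fin D) ℂ) :
    ∑ b' : Fin D, (l ᵥ* B) b' * (C *ᵥ r) b' = l ⬝ᵥ ((B * C) *ᵥ r) := by
  have h : ∑ b' : Fin D, (l ᵥ* B) b' * (C *ᵥ r) b' = (l ᵥ* B) ⬝ᵥ (C *ᵥ r) := rfl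
  rw [h, ← Matrix.dotProduct_mulVec, Matrix.mulVec_mulVec]

lemma dot3 {D : ℕ} (l r : Fin D → ℂ) (B M C : Matrix (Fin D) (Fin D) ℂ) :
    ∑ a' : Fin D, ∑ b' : Fin D, (l ᵥ* B) a' * M a' b' * (C *ᵥ r) b'
      = l ⬝ᵥ ((B * M * C) *ᵥ r) := by
  have h1 : ∀ a', ∑ b' : Fin D, (l ᵥ* B) a' * M a' b' * (C *ᵥ r) b'
      = (l ᵥ* B) a' * ((M * C) *ᵥ r) a' := by
    intro a'
    rw [← Matrix.mulVec_mulVec]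
    rw [show (M *ᵥ (C *ᵥ r)) a' = ∑ b', M a' b' * (C *ᵥ r) b' from rfl, Finset.mul_sum]
    exact Finset.sum_congr rfl fun b' _ => mul_assoc _ _ _
  rw [Finset.sum_congr rfl fun a' _ => h1 a', dot2, mul_assoc]

lemma snoc_eq_snoc_iff {α : Type*} {n : ℕ} {i j : Fin n → α} {x y : α} :
    (Fin.snoc i x : Fin (n+1) → α) = Fin.snoc j y ↔ i = j ∧ x = y := by
  constructor
  · intro h
    refine ⟨?_, ?_⟩
    · funext k
      have := congrFun h k.castSucc
      simpa using this
    · have := congrFun h (Fin.last n)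
      simpa using this
  · rintro ⟨rfl, rfl⟩; rfl

lemma posSemidef_sum {n : ℕ} {ι : Type*} (s : Finset ι) (f : ι → Matrix (Fin n) (Fin n) ℂ)
    (h : ∀ i ∈ s, (f i).PosSemidef) : (∑ i ∈ s, f i).PosSemidef := by
  classical
  induction s using Finset.induction with
  | empty => simpa using Matrix.PosSemidef.zero
  | @insert x s hx ih =>
    rw [Finset.sum_insert hx]
    exact ((h _ (Finset.mem_insert_self _ _)).add
      (ih fun i hi => h i (Finset.mem_insert_of_mem hi)))

lemma sum4_factor {γ γ' δ δ' : Type*} [Fintype γ] [Fintype γ'] [Fintype δ] [Fintype δ']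
    (f : γ → γ' → ℂ) (g : δ → δ' → ℂ) :
    (∑ a, ∑ b, ∑ c, ∑ e, f a b * g c e) = (∑ a, ∑ b, f a b) * (∑ c, ∑ e, g c e) := by
  simp only [Finset.sum_mul, Finset.mul_sum]
  exact sum_reorder4 _

end MPUAux

/-- **Local isometries, uniform case** (Lemma of the end matter): if the uniform-bulk MPO
`(U_N)_{i j} = l ⬝ᵥ (T^{i,j} *ᵥ r)` is unitary for every `N ≥ 1`, then for any density
matrices `σ, τ` the matrices `L², R²` are positive semidefinite and, with `L, R` their
positive-semidefinite square roots, the maps `V_n^{[L,R]}`, `V_n^{[l,R]}`, `V_n^{[L,r]}`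
are isometries for every `n ≥ 1`. -/
theorem uniform_bulk_mpu_local_isometries (d D : ℕ) (hd : 1 ≤ d) (hD : 1 ≤ D)
    (A : Fin d → Fin d → Matrix (Fin D) (Fin D) ℂ) (l r : Fin D → ℂ)
    (hU : ∀ N : ℕ, 1 ≤ N →
      (Matrix.of fun i j : Fin N → Fin d => l ⬝ᵥ (uniformT A i j *ᵥ r)) ∈
        Matrix.unitaryGroup (Fin N → Fin d) ℂ)
    (σ τ : Matrix (Fin d) (Fin d) ℂ)
    (hσ : σ.PosSemidef) (hσ1 : σ.trace = 1)
    (hτ : τ.PosSemidef) (hτ1 : τ.trace = 1) :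
    ∃ hL : (Matrix.of fun a' a : Fin D =>
        ∑ i : Fin d, ∑ j : Fin d, ∑ j' : Fin d,
          σ j j' * star ((l ᵥ* A i j') a') * ((l ᵥ* A i j) a)).PosSemidef,
    ∃ hR : (Matrix.of fun b b' : Fin D =>
        ∑ i : Fin d, ∑ j : Fin d, ∑ j' : Fin d,
          τ j j' * star ((A i j' *ᵥ r) b') * ((A i j *ᵥ r) b)).PosSemidef,
    ∀ n : ℕ, 1 ≤ n →
      (let V : Matrix (Fin D × (Fin n → Fin d) × Fin D) (Fin n → Fin d) ℂ :=
        Matrix.of fun p jv =>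
          ∑ a' : Fin D, ∑ b' : Fin D,
            hL.sqrt p.1 a' * uniformT A p.2.1 jv a' b' * hR.sqrt b' p.2.2
       Vᴴ * V = 1) ∧
      (let VlR : Matrix ((Fin n → Fin d) × Fin D) (Fin n → Fin d) ℂ :=
        Matrix.of fun p jv =>
          ∑ b' : Fin D, (l ᵥ* uniformT A p.1 jv) b' * hR.sqrt b' p.2
       VlRᴴ * VlR = 1) ∧
      (let VLr : Matrix (Fin D × (Fin n → Fin d)) (Fin n → Fin d) ℂ :=
        Matrix.of fun p jv =>
          ∑ a' : Fin D, hL.sqrt p.1 a' * (uniformT A p.2 jv *ᵥ r) a'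
       VLrᴴ * VLr = 1) := by
  classical
  -- Positive semidefiniteness of L²
  have hL2 : (Matrix.of fun a' a : Fin D =>
      ∑ i : Fin d, ∑ j : Fin d, ∑ j' : Fin d,
        σ j j' * star ((l ᵥ* A i j') a') * ((l ᵥ* A i j) a)).PosSemidef := by
    have hrep : (Matrix.of fun a' a : Fin D =>
        ∑ i : Fin d, ∑ j : Fin d, ∑ j' : Fin d,
          σ j j' * star ((l ᵥ* A i j') a') * ((l ᵥ* A i j) a))
        = ∑ x : Fin d,
            (Matrix.of fun (y : Fin d) (a : Fin D) => (l ᵥ* A x y) a)ᴴ * σᵀ *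
              (Matrix.of fun (y : Fin d) (a : Fin D) => (l ᵥ* A x y) a) := by
      ext a' a
      simp only [Matrix.sum_apply, Matrix.mul_apply, Matrix.conjTranspose_apply,
        Matrix.transpose_apply, Matrix.of_apply, Finset.sum_mul]
      refine Finset.sum_congr rfl fun x _ => ?_
      refine Finset.sum_congr rfl fun y _ => Finset.sum_congr rfl fun y' _ => by ring
    rw [hrep]
    exact MPUAux.posSemidef_sum _ _ fun x _ => hσ.transpose.conjTranspose_mul_mul_same _
  -- Positive semidefiniteness of R²
  have hR2 : (Matrix.of fun b b' : Fin D =>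
      ∑ i : Fin d, ∑ j : Fin d, ∑ j' : Fin d,
        τ j j' * star ((A i j' *ᵥ r) b') * ((A i j *ᵥ r) b)).PosSemidef := by
    have hrep : (Matrix.of fun b b' : Fin D =>
        ∑ i : Fin d, ∑ j : Fin d, ∑ j' : Fin d,
          τ j j' * star ((A i j' *ᵥ r) b') * ((A i j *ᵥ r) b))
        = ∑ x : Fin d,
            (Matrix.of fun (b : Fin D) (y : Fin d) => (A x y *ᵥ r) b) * τ *
              (Matrix.of fun (b : Fin D) (y : Fin d) => (A x y *ᵥ r) b)ᴴ := by
      ext b b'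
      simp only [Matrix.sum_apply, Matrix.mul_apply, Matrix.conjTranspose_apply,
        Matrix.of_apply, Finset.sum_mul]
      refine Finset.sum_congr rfl fun x _ => ?_
      rw [Finset.sum_comm]
      refine Finset.sum_congr rfl fun y _ => Finset.sum_congr rfl fun y' _ => by ring
    rw [hrep]
    exact MPUAux.posSemidef_sum _ _ fun x _ => hτ.mul_mul_conjTranspose_same _
  -- trace facts
  have htrσ : (∑ y : Fin d, σ y y) = 1 := by
    simpa [Matrix.trace, Matrix.diag] using hσ1
  have htrτ : (∑ y : Fin d, τ y y) = 1 := by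
    simpa [Matrix.trace, Matrix.diag] using hτ1
  -- entrywise orthogonality from unitarity
  have orth : ∀ (N : ℕ), 1 ≤ N → ∀ jA jB : Fin N → Fin d,
      (∑ i : Fin N → Fin d,
        star (l ⬝ᵥ (uniformT A i jB *ᵥ r)) * (l ⬝ᵥ (uniformT A i jA *ᵥ r)))
        = if jB = jA then 1 else 0 := by
    intro N hN jA jB
    have h := Matrix.mem_unitaryGroup_iff'.mp (hU N hN)
    have h2 := congrFun (congrFun h jB) jA
    simpa [Matrix.mul_apply, Matrix.star_apply, Matrix.of_apply, Matrix.one_apply] using h2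
  refine ⟨hL2, hR2, fun n hn => ?_⟩
  -- summation over tuples via snoc / cons
  have snoc_sum : ∀ jA jB : Fin (n+1) → Fin d,
      (∑ i : Fin n → Fin d, ∑ x : Fin d,
        star (l ⬝ᵥ (uniformT A (Fin.snoc i x) jB *ᵥ r)) *
          (l ⬝ᵥ (uniformT A (Fin.snoc i x) jA *ᵥ r)))
        = if jB = jA then 1 else 0 := by
    intro jA jB
    rw [← orth (n+1) (by omega) jA jB]
    rw [← Fintype.sum_prod_type']
    exact Fintype.sum_equiv ((Equiv.prodComm _ _).trans (Fin.snocEquiv fun _ => Fin d))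
      _ _ fun q => rfl
  have cons_sum : ∀ jA jB : Fin (n+1) → Fin d,
      (∑ i : Fin n → Fin d, ∑ x : Fin d,
        star (l ⬝ᵥ (uniformT A (Fin.cons x i) jB *ᵥ r)) *
          (l ⬝ᵥ (uniformT A (Fin.cons x i) jA *ᵥ r)))
        = if jB = jA then 1 else 0 := by
    intro jA jB
    rw [← orth (n+1) (by omega) jA jB]
    rw [← Fintype.sum_prod_type']
    exact Fintype.sum_equiv ((Equiv.prodComm _ _).trans (Fin.consEquiv fun _ => Fin d))
      _ _ fun q => rfl
  have cons_snoc_sum : ∀ jA jB : Fin (n+2) → Fin d,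
      (∑ i : Fin n → Fin d, ∑ xL : Fin d, ∑ x : Fin d,
        star (l ⬝ᵥ (uniformT A (Fin.cons xL (Fin.snoc i x)) jB *ᵥ r)) *
          (l ⬝ᵥ (uniformT A (Fin.cons xL (Fin.snoc i x)) jA *ᵥ r)))
        = if jB = jA then 1 else 0 := by
    intro jA jB
    rw [← orth (n+2) (by omega) jA jB]
    simp only [← Fintype.sum_prod_type']
    refine Fintype.sum_equiv
      ((⟨fun q => (q.2.1, q.2.2, q.1), fun q => (q.2.2, q.1, q.2.1),
          fun _ => rfl, fun _ => rfl⟩ :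
        ((Fin n → Fin d) × Fin d × Fin d) ≃ (Fin d × Fin d × (Fin n → Fin d))).trans
        ((Equiv.prodCongr (Equiv.refl (Fin d)) (Fin.snocEquiv fun _ => Fin d)).trans
          (Fin.consEquiv fun _ => Fin d))) _ _ fun q => rfl
  -- dot-product contraction identities
  have hdots : ∀ (i jv : Fin n → Fin d) (x y : Fin d),
      (∑ b' : Fin D, (l ᵥ* uniformT A i jv) b' * (A x y *ᵥ r) b')
        = l ⬝ᵥ (uniformT A (Fin.snoc i x) (Fin.snoc jv y) *ᵥ r) := by
    intro i jv x y
    rw [MPUAux.dot2, MPUAux.uniformT_snoc]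
  have hdotc : ∀ (m : ℕ) (x y : Fin d) (i jv : Fin m → Fin d),
      (∑ a' : Fin D, (l ᵥ* A x y) a' * (uniformT A i jv *ᵥ r) a')
        = l ⬝ᵥ (uniformT A (Fin.cons x i) (Fin.cons y jv) *ᵥ r) := by
    intro m x y i jv
    rw [MPUAux.dot2, MPUAux.uniformT_cons]
  have hmulvec : ∀ (i jv : Fin n → Fin d) (x y : Fin d) (a' : Fin D),
      (∑ b' : Fin D, uniformT A i jv a' b' * (A x y *ᵥ r) b')
        = (uniformT A (Fin.snoc i x) (Fin.snoc jv y) *ᵥ r) a' := by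
    intro i jv x y a'
    rw [MPUAux.uniformT_snoc, ← Matrix.mulVec_mulVec]
    rfl
  have hsplit_ite : ∀ (P Q : Prop) (_ : Decidable P) (_ : Decidable Q),
      (if P ∧ Q then (1:ℂ) else 0) = (if P then (1:ℂ) else 0) * (if Q then (1:ℂ) else 0) := by
    intro P Q dP dQ
    by_cases hP : P <;> by_cases hQ : Q <;> simp [hP, hQ]
  refine ⟨?_, ?_, ?_⟩
  -- Case 1: full V with L and R
  · dsimp only
    ext j' j
    simp only [Matrix.mul_apply, Matrix.conjTranspose_apply, Matrix.of_apply, Matrix.one_apply]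
    simp only [Fintype.sum_prod_type]
    rw [MPUAux.sum_cyc3]
    have hsplitV : ∀ (i jv : Fin n → Fin d) (a b : Fin D),
        (∑ a' : Fin D, ∑ b' : Fin D, hL2.sqrt a a' * uniformT A i jv a' b' * hR2.sqrt b' b)
          = ∑ a' : Fin D, hL2.sqrt a a' *
              ∑ b' : Fin D, uniformT A i jv a' b' * hR2.sqrt b' b := by
      intro i jv a b
      refine Finset.sum_congr rfl fun a' _ => ?_
      rw [Finset.mul_sum]
      exact Finset.sum_congr rfl fun b' _ => mul_assoc _ _ _
    simp only [hsplitV]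
    have h1 : ∀ (i : Fin n → Fin d) (b : Fin D),
        (∑ a : Fin D,
          star (∑ a'' : Fin D, hL2.sqrt a a'' *
              ∑ b'' : Fin D, uniformT A i j' a'' b'' * hR2.sqrt b'' b) *
            (∑ a' : Fin D, hL2.sqrt a a' *
              ∑ b' : Fin D, uniformT A i j a' b' * hR2.sqrt b' b))
          = ∑ a' : Fin D, ∑ a'' : Fin D,
              (Matrix.of fun a' a : Fin D =>
                ∑ i : Fin d, ∑ j : Fin d, ∑ j' : Fin d,
                  σ j j' * star ((l ᵥ* A i j') a') * ((l ᵥ* A i j) a)) a'' a' *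
                star (∑ b'' : Fin D, uniformT A i j' a'' b'' * hR2.sqrt b'' b) *
                (∑ b' : Fin D, uniformT A i j a' b' * hR2.sqrt b' b) :=
      fun i b => MPUAux.sqrt_contract_l hL2 _ _
    simp only [h1]
    have h2 : ∀ i : Fin n → Fin d,
        (∑ b : Fin D, ∑ a' : Fin D, ∑ a'' : Fin D,
          (Matrix.of fun a' a : Fin D =>
            ∑ i : Fin d, ∑ j : Fin d, ∑ j' : Fin d,
              σ j j' * star ((l ᵥ* A i j') a') * ((l ᵥ* A i j) a)) a'' a' *
            star (∑ b'' : Fin D, uniformT A i j' a'' b'' * hR2.sqrt b'' b) *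
            (∑ b' : Fin D, uniformT A i j a' b' * hR2.sqrt b' b))
          = ∑ a' : Fin D, ∑ a'' : Fin D, ∑ b : Fin D,
              (Matrix.of fun a' a : Fin D =>
                ∑ i : Fin d, ∑ j : Fin d, ∑ j' : Fin d,
                  σ j j' * star ((l ᵥ* A i j') a') * ((l ᵥ* A i j) a)) a'' a' *
                star (∑ b'' : Fin D, uniformT A i j' a'' b'' * hR2.sqrt b'' b) *
                (∑ b' : Fin D, uniformT A i j a' b' * hR2.sqrt b' b) :=
      fun i => MPUAux.sum_cyc3 _
    simp only [h2]
    have h3 : ∀ (i : Fin n → Fin d) (a' a'' : Fin D),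
        (∑ b : Fin D,
          (Matrix.of fun a' a : Fin D =>
            ∑ i : Fin d, ∑ j : Fin d, ∑ j' : Fin d,
              σ j j' * star ((l ᵥ* A i j') a') * ((l ᵥ* A i j) a)) a'' a' *
            star (∑ b'' : Fin D, uniformT A i j' a'' b'' * hR2.sqrt b'' b) *
            (∑ b' : Fin D, uniformT A i j a' b' * hR2.sqrt b' b))
          = (Matrix.of fun a' a : Fin D =>
              ∑ i : Fin d, ∑ j : Fin d, ∑ j' : Fin d,
                σ j j' * star ((l ᵥ* A i j') a') * ((l ᵥ* A i j) a)) a'' a' *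
              ∑ b' : Fin D, ∑ b'' : Fin D,
                star (uniformT A i j' a'' b'') * uniformT A i j a' b' *
                  (Matrix.of fun b b' : Fin D =>
                    ∑ i : Fin d, ∑ j : Fin d, ∑ j' : Fin d,
                      τ j j' * star ((A i j' *ᵥ r) b') * ((A i j *ᵥ r) b)) b' b'' := by
      intro i a' a''
      rw [← MPUAux.sqrt_contract_r hR2 (fun b' => uniformT A i j a' b')
        (fun b'' => uniformT A i j' a'' b''), Finset.mul_sum]
      exact Finset.sum_congr rfl fun b _ => mul_assoc _ _ _
    simp only [h3]
    simp only [Matrix.of_apply]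
    have h4 : ∀ (i : Fin n → Fin d) (a' a'' : Fin D),
        (∑ b' : Fin D, ∑ b'' : Fin D,
          star (uniformT A i j' a'' b'') * uniformT A i j a' b' *
            ∑ x : Fin d, ∑ y : Fin d, ∑ y' : Fin d,
              τ y y' * star ((A x y' *ᵥ r) b'') * ((A x y *ᵥ r) b'))
          = ∑ x : Fin d, ∑ y : Fin d, ∑ y' : Fin d,
              τ y y' * star (∑ b'' : Fin D, uniformT A i j' a'' b'' * (A x y' *ᵥ r) b'') *
                (∑ b' : Fin D, uniformT A i j a' b' * (A x y *ᵥ r) b') :=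
      fun i a' a'' => MPUAux.aux_expand _ _ _ _ _
    refine Eq.trans (Finset.sum_congr rfl fun i _ => Finset.sum_congr rfl fun a' _ =>
      Finset.sum_congr rfl fun a'' _ => congrArg (HMul.hMul _) (h4 i a' a'')) ?_
    simp only [hmulvec]
    have h5 : ∀ i : Fin n → Fin d,
        (∑ a' : Fin D, ∑ a'' : Fin D,
          (∑ xL : Fin d, ∑ yL : Fin d, ∑ yL' : Fin d,
            σ yL yL' * star ((l ᵥ* A xL yL') a'') * ((l ᵥ* A xL yL) a')) *
            ∑ x : Fin d, ∑ y : Fin d, ∑ y' : Fin d,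
              τ y y' * star ((uniformT A (Fin.snoc i x) (Fin.snoc j' y') *ᵥ r) a'') *
                ((uniformT A (Fin.snoc i x) (Fin.snoc j y) *ᵥ r) a'))
          = ∑ xL : Fin d, ∑ yL : Fin d, ∑ yL' : Fin d, ∑ x : Fin d, ∑ y : Fin d, ∑ y' : Fin d,
              σ yL yL' * τ y y' *
                star (∑ a'' : Fin D, (l ᵥ* A xL yL') a'' *
                  (uniformT A (Fin.snoc i x) (Fin.snoc j' y') *ᵥ r) a'') *
                (∑ a' : Fin D, (l ᵥ* A xL yL) a' *
                  (uniformT A (Fin.snoc i x) (Fin.snoc j y) *ᵥ r) a') :=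
      fun i => MPUAux.aux_expandLL _ _ _ _ _ _
    simp only [h5, hdotc]
    rw [MPUAux.sum_reorder7]
    have hpull : ∀ yL yL' y y' : Fin d,
        (∑ i : Fin n → Fin d, ∑ xL : Fin d, ∑ x : Fin d,
          σ yL yL' * τ y y' *
            star (l ⬝ᵥ (uniformT A (Fin.cons xL (Fin.snoc i x))
              (Fin.cons yL' (Fin.snoc j' y')) *ᵥ r)) *
            (l ⬝ᵥ (uniformT A (Fin.cons xL (Fin.snoc i x))
              (Fin.cons yL (Fin.snoc j y)) *ᵥ r)))
          = σ yL yL' * (τ y y' *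
              (if (Fin.cons yL' (Fin.snoc j' y') : Fin (n+2) → Fin d)
                  = Fin.cons yL (Fin.snoc j y) then (1:ℂ) else 0)) := by
      intro yL yL' y y'
      simp only [mul_assoc, ← Finset.mul_sum]
      rw [cons_snoc_sum (Fin.cons yL (Fin.snoc j y)) (Fin.cons yL' (Fin.snoc j' y'))]
    simp only [hpull, Fin.cons_inj, MPUAux.snoc_eq_snoc_iff]
    by_cases h : j' = j
    · subst h
      rw [if_pos rfl]
      simp only [eq_self_iff_true, true_and]
      simp only [hsplit_ite]
      have hcongr : (∑ yL : Fin d, ∑ yL' : Fin d, ∑ y : Fin d, ∑ y' : Fin d,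
          σ yL yL' * (τ y y' *
            ((if yL' = yL then (1:ℂ) else 0) * (if y' = y then (1:ℂ) else 0))))
          = ∑ yL : Fin d, ∑ yL' : Fin d, ∑ y : Fin d, ∑ y' : Fin d,
              (σ yL yL' * (if yL' = yL then (1:ℂ) else 0)) *
                (τ y y' * (if y' = y then (1:ℂ) else 0)) := by
        refine Finset.sum_congr rfl fun yL _ => Finset.sum_congr rfl fun yL' _ =>
          Finset.sum_congr rfl fun y _ => Finset.sum_congr rfl fun y' _ => by ring
      rw [hcongr, MPUAux.sum4_factor]
      have e1 : (∑ yL : Fin d, ∑ yL' : Fin d, σ yL yL' * (if yL' = yL then (1:ℂ) else 0)) = 1 := by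
        simpa [mul_ite, mul_one, mul_zero, Finset.sum_ite_eq', Finset.mem_univ] using htrσ
      have e2 : (∑ y : Fin d, ∑ y' : Fin d, τ y y' * (if y' = y then (1:ℂ) else 0)) = 1 := by
        simpa [mul_ite, mul_one, mul_zero, Finset.sum_ite_eq', Finset.mem_univ] using htrτ
      rw [e1, e2, one_mul]
    · rw [if_neg h]
      simp [h]
  -- Case 2: VlR
  · dsimp only
    ext j' j
    simp only [Matrix.mul_apply, Matrix.conjTranspose_apply, Matrix.of_apply, Matrix.one_apply]
    rw [Fintype.sum_prod_type]
    dsimp only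
    have h1 : ∀ i : Fin n → Fin d,
        (∑ b : Fin D,
          star (∑ b'' : Fin D, (l ᵥ* uniformT A i j') b'' * hR2.sqrt b'' b) *
            (∑ b' : Fin D, (l ᵥ* uniformT A i j) b' * hR2.sqrt b' b))
          = ∑ b' : Fin D, ∑ b'' : Fin D,
              star ((l ᵥ* uniformT A i j') b'') * (l ᵥ* uniformT A i j) b' *
                (Matrix.of fun b b' : Fin D =>
                  ∑ i : Fin d, ∑ j : Fin d, ∑ j' : Fin d,
                    τ j j' * star ((A i j' *ᵥ r) b') * ((A i j *ᵥ r) b)) b' b'' :=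
      fun i => MPUAux.sqrt_contract_r hR2 _ _
    simp only [h1, Matrix.of_apply]
    simp only [MPUAux.aux_expand (c := fun y y' => τ y y'), hdots]
    rw [MPUAux.sum_reorder4]
    have hpull : ∀ y y' : Fin d,
        (∑ i : Fin n → Fin d, ∑ x : Fin d,
          τ y y' * star (l ⬝ᵥ (uniformT A (Fin.snoc i x) (Fin.snoc j' y') *ᵥ r)) *
            (l ⬝ᵥ (uniformT A (Fin.snoc i x) (Fin.snoc j y) *ᵥ r)))
          = τ y y' * (if (Fin.snoc j' y' : Fin (n+1) → Fin d) = Fin.snoc j y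
              then (1:ℂ) else 0) := by
      intro y y'
      simp only [mul_assoc, ← Finset.mul_sum]
      rw [snoc_sum (Fin.snoc j y) (Fin.snoc j' y')]
    simp only [hpull, MPUAux.snoc_eq_snoc_iff]
    by_cases h : j' = j
    · subst h
      rw [if_pos rfl]
      simp only [true_and]
      simpa [mul_ite, mul_one, mul_zero, Finset.sum_ite_eq', Finset.mem_univ] using htrτ
    · rw [if_neg h]
      simp [h]
  -- Case 3: VLr
  · dsimp only
    ext j' j
    simp only [Matrix.mul_apply, Matrix.conjTranspose_apply, Matrix.of_apply, Matrix.one_apply]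
    rw [Fintype.sum_prod_type]
    dsimp only
    rw [Finset.sum_comm]
    have h1 : ∀ i : Fin n → Fin d,
        (∑ a : Fin D,
          star (∑ a'' : Fin D, hL2.sqrt a a'' * (uniformT A i j' *ᵥ r) a'') *
            (∑ a' : Fin D, hL2.sqrt a a' * (uniformT A i j *ᵥ r) a'))
          = ∑ a' : Fin D, ∑ a'' : Fin D,
              (Matrix.of fun a' a : Fin D =>
                ∑ i : Fin d, ∑ j : Fin d, ∑ j' : Fin d,
                  σ j j' * star ((l ᵥ* A i j') a') * ((l ᵥ* A i j) a)) a'' a' *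
                star ((uniformT A i j' *ᵥ r) a'') * (uniformT A i j *ᵥ r) a' :=
      fun i => MPUAux.sqrt_contract_l hL2 _ _
    simp only [h1, Matrix.of_apply]
    simp only [MPUAux.aux_expandL (c := fun y y' => σ y y'), hdotc]
    rw [MPUAux.sum_reorder4]
    have hpull : ∀ y y' : Fin d,
        (∑ i : Fin n → Fin d, ∑ x : Fin d,
          σ y y' * star (l ⬝ᵥ (uniformT A (Fin.cons x i) (Fin.cons y' j') *ᵥ r)) *
            (l ⬝ᵥ (uniformT A (Fin.cons x i) (Fin.cons y j) *ᵥ r)))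
          = σ y y' * (if (Fin.cons y' j' : Fin (n+1) → Fin d) = Fin.cons y j
              then (1:ℂ) else 0) := by
      intro y y'
      simp only [mul_assoc, ← Finset.mul_sum]
      rw [cons_sum (Fin.cons y j) (Fin.cons y' j')]
    simp only [hpull, Fin.cons_inj]
    by_cases h : j' = j
    · subst h
      rw [if_pos rfl]
      simp only [and_true]
      simpa [mul_ite, mul_one, mul_zero, Finset.sum_ite_eq', Finset.mem_univ] using htrσ
    · rw [if_neg h]
      simp [h]
end
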